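/- arXiv:1410.2961 — 3 statements merged into one kernel-verified Lean document; each statement's English description precedes it below -/
import Mathlib

section
/- The maximum likelihood decision (δ₀,δ₁) = (0,1) is admissible: no decision δ' ∈ [0,1]² dominates (0,1). -/
/-!
The decision `(0, 1)` has zero risk at both endpoints `θ = 0` and `θ = 1`. At an endpoint the
risk reduces to the loss of a single coordinate, and the Kullback–Leibler loss `L(0, d)`
(resp. `L(1, d)`) vanishes on `[0, 1]` only at `d = 0` (resp. `d = 1`). So a decision whose risk
is everywhere at most that of `(0, 1)` is `(0, 1)` itself, and cannot be strictly better anywhere.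
-/

open scoped ENNReal

/-- The Kullback–Leibler loss `L(θ,d) = θ·log(θ/d) + (1−θ)·log((1−θ)/(1−d)) ∈ [0,∞]`,
with the conventions `0 · log(0/c) = 0` and `c · log(c/0) = +∞` for `c > 0`.
(When `θ = 0` or `θ = 1`, the corresponding vanishing term is `0` automatically
since `Real.log 0 = 0` in Lean.) -/
noncomputable def KLoss (θ d : ℝ) : ℝ≥0∞ :=
  if (θ ≠ 0 ∧ d = 0) ∨ (θ ≠ 1 ∧ d = 1) then ⊤
  else ENNReal.ofReal
    (θ * Real.log (θ / d) + (1 - θ) * Real.log ((1 - θ) / (1 - d)))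

/-- The risk function `R_δ(θ) = (1−θ)·L(θ,δ₀) + θ·L(θ,δ₁) ∈ [0,∞]`
of a decision `δ = (δ₀, δ₁)`. -/
noncomputable def risk (δ : ℝ × ℝ) (θ : ℝ) : ℝ≥0∞ :=
  ENNReal.ofReal (1 - θ) * KLoss θ δ.1 + ENNReal.ofReal θ * KLoss θ δ.2

/-- `δ'` dominates `δ`: `R_{δ'} ≤ R_δ` on `[0,1]`, with strict inequality somewhere. -/
def Dominates (δ' δ : ℝ × ℝ) : Prop :=
  (∀ θ ∈ Set.Icc (0 : ℝ) 1, risk δ' θ ≤ risk δ θ) ∧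
  (∃ θ ∈ Set.Icc (0 : ℝ) 1, risk δ' θ < risk δ θ)

open Set

theorem KLoss_one_sub_one_sub (θ d : ℝ) : KLoss (1 - θ) (1 - d) = KLoss θ d := by
  unfold KLoss
  have hcond : ((1 - θ ≠ 0 ∧ 1 - d = 0) ∨ (1 - θ ≠ 1 ∧ 1 - d = 1)) ↔
      ((θ ≠ 0 ∧ d = 0) ∨ (θ ≠ 1 ∧ d = 1)) := by
    simp only [ne_eq, sub_eq_zero, sub_eq_self, eq_comm (a := (1 : ℝ))]
    tauto
  simp only [hcond, sub_sub_cancel]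
  congr 2
  ring

theorem KLoss_zero_eq_zero_iff {d : ℝ} (hd : d ∈ Icc (0 : ℝ) 1) : KLoss 0 d = 0 ↔ d = 0 := by
  rcases hd.2.eq_or_lt with rfl | hd1
  · simp [KLoss]
  · have h1d : 0 < 1 - d := sub_pos.mpr hd1
    rw [KLoss, if_neg (by simp [hd1.ne]), zero_mul, zero_add, sub_zero, one_mul,
      ENNReal.ofReal_eq_zero, one_div, Real.log_inv, neg_nonpos, Real.log_nonneg_iff h1d]
    constructor
    · intro h; linarith [hd.1]
    · rintro rfl; simp

theorem KLoss_one_eq_zero_iff {d : ℝ} (hd : d ∈ Icc (0 : ℝ) 1) : KLoss 1 d = 0 ↔ d = 1 := by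
  have h1d : 1 - d ∈ Icc (0 : ℝ) 1 := ⟨by linarith [hd.2], by linarith [hd.1]⟩
  rw [← KLoss_one_sub_one_sub, sub_self, KLoss_zero_eq_zero_iff h1d, sub_eq_zero, eq_comm]

theorem risk_zero (δ : ℝ × ℝ) : risk δ 0 = KLoss 0 δ.1 := by
  simp [risk]

theorem risk_one (δ : ℝ × ℝ) : risk δ 1 = KLoss 1 δ.2 := by
  simp [risk]

theorem risk_zero_eq_zero_and_risk_one_eq_zero_iff {δ : ℝ × ℝ}
    (h₁ : δ.1 ∈ Icc (0 : ℝ) 1) (h₂ : δ.2 ∈ Icc (0 : ℝ) 1) :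
    risk δ 0 = 0 ∧ risk δ 1 = 0 ↔ δ = (0, 1) := by
  rw [risk_zero, risk_one, KLoss_zero_eq_zero_iff h₁, KLoss_one_eq_zero_iff h₂, Prod.ext_iff]

/-- The maximum likelihood decision `(0,1)` is admissible: no decision in `[0,1]²`
dominates it. -/
theorem mle_admissible :
    ∀ δ' : ℝ × ℝ, δ'.1 ∈ Set.Icc (0 : ℝ) 1 → δ'.2 ∈ Set.Icc (0 : ℝ) 1 →
      ¬ Dominates δ' (0, 1) := by
  rintro δ' h₁ h₂ ⟨hle, θ, -, hlt⟩
  have h0 : (0 : ℝ) ∈ Icc (0 : ℝ) 1 := left_mem_Icc.2 zero_le_one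
  have h1 : (1 : ℝ) ∈ Icc (0 : ℝ) 1 := right_mem_Icc.2 zero_le_one
  obtain ⟨hmle0, hmle1⟩ := (risk_zero_eq_zero_and_risk_one_eq_zero_iff h0 h1).2 rfl
  have hδ' : δ' = (0, 1) := (risk_zero_eq_zero_and_risk_one_eq_zero_iff h₁ h₂).1
    ⟨le_zero_iff.1 (hmle0 ▸ hle 0 h0), le_zero_iff.1 (hmle1 ▸ hle 1 h1)⟩
  exact (hδ' ▸ hlt).false
end

section
/- Let π be a Borel probability measure on [0,1] satisfying ∫ θ dπ(θ) = 1/2 and ∫ θ² dπ(θ) = 2/5, and suppose π minimizes ∫ S(θ) dπ(θ) among all Borel probability measures on [0,1] satisfying these two moment conditions. Then π is a discrete measure whose support contains at most four points. -/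
/-!
On `[0,1]` the quadratic `4 log 2 · θ(1-θ)` lies below `S`, touching it exactly at `0`, `1/2` and
`1`: the gap is symmetric about `1/2`, strictly concave on `[0, θ₀]` (`θ₀` its inflection point)
and strictly decreasing to `0` on `[θ₀, 1/2]`. Under the moment conditions
`∫ θ(1-θ) dπ = 1/10`, so `∫ S dπ ≥ (2/5) log 2` with equality iff `π` lives on `{0, 1/2, 1}`.
The prior `(3/10) δ₀ + (2/5) δ_{1/2} + (3/10) δ₁` meets the moment conditions and attains
`(2/5) log 2`, so a minimizer has zero gap almost everywhere.
-/

open MeasureTheory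

/-- The binary entropy function `S(θ) = −θ log θ − (1−θ) log(1−θ)`
(with the convention `0 · log 0 = 0`, which holds automatically since `Real.log 0 = 0`). -/
noncomputable def binEnt (θ : ℝ) : ℝ := -θ * Real.log θ - (1 - θ) * Real.log (1 - θ)

open Set

section

open Real

lemma binEnt_eq_negMulLog_add (θ : ℝ) : binEnt θ = negMulLog θ + negMulLog (1 - θ) := by
  simp only [binEnt, negMulLog]
  ring

lemma continuous_binEnt : Continuous binEnt := by
  rw [funext binEnt_eq_negMulLog_add]
  exact continuous_negMulLog.add (continuous_negMulLog.comp (continuous_const.sub continuous_id))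

@[simp] lemma binEnt_zero : binEnt 0 = 0 := by simp [binEnt]

@[simp] lemma binEnt_one : binEnt 1 = 0 := by simp [binEnt]

lemma binEnt_half : binEnt (1 / 2) = log 2 := by
  rw [binEnt, show (1 : ℝ) - 1 / 2 = 2⁻¹ by norm_num, one_div, log_inv]
  ring

lemma binEnt_one_sub (θ : ℝ) : binEnt (1 - θ) = binEnt θ := by
  rw [binEnt_eq_negMulLog_add, binEnt_eq_negMulLog_add, sub_sub_cancel, add_comm]

lemma hasDerivAt_binEnt {θ : ℝ} (h0 : θ ≠ 0) (h1 : θ ≠ 1) :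
    HasDerivAt binEnt (log (1 - θ) - log θ) θ := by
  have hsub : HasDerivAt (fun x : ℝ => 1 - x) (-1) θ := by
    simpa using (hasDerivAt_id θ).const_sub 1
  rw [funext binEnt_eq_negMulLog_add]
  refine ((hasDerivAt_negMulLog h0).add
    ((hasDerivAt_negMulLog (sub_ne_zero.2 h1.symm)).comp θ hsub)).congr_deriv ?_
  ring

noncomputable def entropyGap (θ : ℝ) : ℝ := binEnt θ - 4 * log 2 * (θ * (1 - θ))

noncomputable def entropyGapDeriv (θ : ℝ) : ℝ := log (1 - θ) - log θ - 4 * log 2 * (1 - 2 * θ)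

lemma continuous_entropyGap : Continuous entropyGap := by
  unfold entropyGap
  have := continuous_binEnt
  fun_prop

lemma entropyGap_one_sub (θ : ℝ) : entropyGap (1 - θ) = entropyGap θ := by
  simp only [entropyGap, binEnt_one_sub, sub_sub_cancel]
  ring

@[simp] lemma entropyGap_zero : entropyGap 0 = 0 := by simp [entropyGap]

@[simp] lemma entropyGap_one : entropyGap 1 = 0 := by simp [entropyGap]

lemma entropyGap_half : entropyGap (1 / 2) = 0 := by
  rw [entropyGap, binEnt_half]
  ring

lemma entropyGapDeriv_half : entropyGapDeriv (1 / 2) = 0 := by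
  norm_num [entropyGapDeriv]

lemma hasDerivAt_entropyGap {θ : ℝ} (h0 : θ ≠ 0) (h1 : θ ≠ 1) :
    HasDerivAt entropyGap (entropyGapDeriv θ) θ := by
  have hquad : HasDerivAt (fun x : ℝ => x * (1 - x)) (1 - 2 * θ) θ := by
    refine ((hasDerivAt_id θ).mul ((hasDerivAt_id θ).const_sub 1)).congr_deriv ?_
    simp only [id]
    ring
  exact (hasDerivAt_binEnt h0 h1).sub (hquad.const_mul _)

lemma hasDerivAt_entropyGapDeriv {θ : ℝ} (h0 : θ ≠ 0) (h1 : θ ≠ 1) :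
    HasDerivAt entropyGapDeriv (8 * log 2 - 1 / (θ * (1 - θ))) θ := by
  have h1' : 1 - θ ≠ 0 := sub_ne_zero.2 h1.symm
  have hsub : HasDerivAt (fun x : ℝ => 1 - x) (-1) θ := by
    simpa using (hasDerivAt_id θ).const_sub 1
  have hlin : HasDerivAt (fun x : ℝ => 1 - 2 * x) (-2) θ := by
    simpa using ((hasDerivAt_id θ).const_mul 2).const_sub 1
  refine ((((hasDerivAt_log h1').comp θ hsub).sub (hasDerivAt_log h0)).sub
    (hlin.const_mul (4 * log 2))).congr_deriv ?_
  field_simp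
  ring

/-- The root in `(0, 1/2)` of `θ(1-θ) = 1/(8 log 2)`, where `entropyGap''` changes sign. -/
noncomputable def entropyGapInflection : ℝ := (1 - √(1 - 1 / (2 * log 2))) / 2

local notation "θ₀" => entropyGapInflection

lemma one_lt_two_mul_log_two : 1 < 2 * log 2 := by
  linarith [log_two_gt_d9]

lemma entropyGapInflection_mul_one_sub : θ₀ * (1 - θ₀) = 1 / (8 * log 2) := by
  have hrad : 0 ≤ 1 - 1 / (2 * log 2) := by
    rw [sub_nonneg, div_le_one (by positivity)]
    exact one_lt_two_mul_log_two.le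
  have hsq := sq_sqrt hrad
  have : log 2 ≠ 0 := (log_pos one_lt_two).ne'
  unfold entropyGapInflection
  set r := √(1 - 1 / (2 * log 2))
  field_simp
  field_simp at hsq
  linear_combination (-4) * hsq

lemma entropyGapInflection_pos : 0 < θ₀ := by
  have : 0 < 1 / (2 * log 2) := by positivity
  have : √(1 - 1 / (2 * log 2)) < 1 := by
    rw [sqrt_lt' one_pos]
    linarith
  unfold entropyGapInflection
  linarith

lemma entropyGapInflection_lt_half : θ₀ < 1 / 2 := by
  have : 0 < 1 - 1 / (2 * log 2) := by
    rw [sub_pos, div_lt_one (by positivity)]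
    exact one_lt_two_mul_log_two
  have := sqrt_pos.2 this
  unfold entropyGapInflection
  linarith

lemma entropyGap_deriv2_eq {θ : ℝ} (h0 : θ ≠ 0) (h1 : θ ≠ 1) :
    8 * log 2 - 1 / (θ * (1 - θ)) = 8 * log 2 * ((θ - θ₀) * (1 - θ₀ - θ)) / (θ * (1 - θ)) := by
  have : 1 - θ ≠ 0 := sub_ne_zero.2 h1.symm
  have : log 2 ≠ 0 := (log_pos one_lt_two).ne'
  rw [show (θ - θ₀) * (1 - θ₀ - θ) = θ * (1 - θ) - θ₀ * (1 - θ₀) by ring,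
    entropyGapInflection_mul_one_sub]
  field_simp

lemma entropyGapDeriv_neg {θ : ℝ} (h : θ₀ ≤ θ) (h' : θ < 1 / 2) : entropyGapDeriv θ < 0 := by
  have hne {x : ℝ} (hx : x ∈ Icc θ₀ (1 / 2)) : x ≠ 0 ∧ x ≠ 1 :=
    ⟨(entropyGapInflection_pos.trans_le hx.1).ne', (hx.2.trans_lt (by norm_num)).ne⟩
  have hmono : StrictMonoOn entropyGapDeriv (Icc θ₀ (1 / 2)) := by
    refine strictMonoOn_of_deriv_pos (convex_Icc _ _)
      (fun x hx => (hasDerivAt_entropyGapDeriv (hne hx).1 (hne hx).2).continuousAt.continuousWithinAt)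
      (fun x hx => ?_)
    rw [interior_Icc] at hx
    have hx' := hne (Ioo_subset_Icc_self hx)
    rw [(hasDerivAt_entropyGapDeriv hx'.1 hx'.2).deriv, entropyGap_deriv2_eq hx'.1 hx'.2]
    have : 0 < 1 - θ₀ - x := by linarith [hx.2, entropyGapInflection_lt_half]
    have : 0 < 1 - x := by linarith [hx.2]
    have := entropyGapInflection_pos.trans hx.1
    have : 0 < log 2 := log_pos one_lt_two
    have : 0 < x - θ₀ := sub_pos.2 hx.1
    positivity
  have := hmono ⟨h, h'.le⟩ ⟨entropyGapInflection_lt_half.le, le_rfl⟩ h'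
  rwa [entropyGapDeriv_half] at this

lemma entropyGap_pos_of_inflection_le {θ : ℝ} (h : θ₀ ≤ θ) (h' : θ < 1 / 2) :
    0 < entropyGap θ := by
  have hanti : StrictAntiOn entropyGap (Icc θ₀ (1 / 2)) := by
    refine strictAntiOn_of_deriv_neg (convex_Icc _ _) continuous_entropyGap.continuousOn
      (fun x hx => ?_)
    rw [interior_Icc] at hx
    rw [(hasDerivAt_entropyGap (entropyGapInflection_pos.trans hx.1).ne'
      (hx.2.trans (by norm_num)).ne).deriv]
    exact entropyGapDeriv_neg hx.1.le hx.2
  have := hanti ⟨h, h'.le⟩ ⟨entropyGapInflection_lt_half.le, le_rfl⟩ h'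
  rwa [entropyGap_half] at this

lemma strictConcaveOn_entropyGap : StrictConcaveOn ℝ (Icc 0 θ₀) entropyGap := by
  refine strictConcaveOn_of_deriv2_neg (convex_Icc _ _) continuous_entropyGap.continuousOn
    (fun x hx => ?_)
  rw [interior_Icc] at hx
  have hx1 : x < 1 := hx.2.trans (entropyGapInflection_lt_half.trans (by norm_num))
  have hderiv : deriv entropyGap =ᶠ[nhds x] entropyGapDeriv := by
    filter_upwards [Ioo_mem_nhds hx.1 hx1] with y hy
    exact (hasDerivAt_entropyGap hy.1.ne' hy.2.ne).deriv
  rw [Function.iterate_succ_apply, Function.iterate_one, hderiv.deriv_eq,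
    (hasDerivAt_entropyGapDeriv hx.1.ne' hx1.ne).deriv, entropyGap_deriv2_eq hx.1.ne' hx1.ne]
  have : 0 < 1 - θ₀ - x := by linarith [hx.2, entropyGapInflection_lt_half]
  have : 0 < 1 - x := by linarith
  have : 0 < 8 * log 2 := by positivity
  exact div_neg_of_neg_of_pos
    (mul_neg_of_pos_of_neg this (mul_neg_of_neg_of_pos (sub_neg.2 hx.2) ‹_›)) (mul_pos hx.1 ‹_›)

lemma entropyGap_pos_of_lt_inflection {θ : ℝ} (h0 : 0 < θ) (h : θ < θ₀) :
    0 < entropyGap θ := by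
  have hθ₀ := entropyGapInflection_pos
  have hpeak := entropyGap_pos_of_inflection_le le_rfl entropyGapInflection_lt_half
  have t_pos : 0 < θ / θ₀ := div_pos h0 hθ₀
  have t_lt_one : θ / θ₀ < 1 := (div_lt_one hθ₀).2 h
  have hconc := strictConcaveOn_entropyGap.concaveOn.2 (left_mem_Icc.2 hθ₀.le)
    (right_mem_Icc.2 hθ₀.le) (sub_pos.2 t_lt_one).le t_pos.le (sub_add_cancel 1 _)
  simp only [smul_eq_mul, mul_zero, zero_add, entropyGap_zero, div_mul_cancel₀ θ hθ₀.ne']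
    at hconc
  exact (mul_pos t_pos hpeak).trans_le hconc

lemma entropyGap_pos {θ : ℝ} (h0 : 0 < θ) (h1 : θ < 1) (h : θ ≠ 1 / 2) : 0 < entropyGap θ := by
  wlog hθ : θ < 1 / 2 generalizing θ
  · rw [← entropyGap_one_sub]
    refine this (by linarith) (by linarith) (fun h' => h ?_) ?_
    · linarith
    · linarith [lt_of_le_of_ne (not_lt.1 hθ) h.symm]
  rcases le_or_gt θ₀ θ with hle | hlt
  · exact entropyGap_pos_of_inflection_le hle hθ
  · exact entropyGap_pos_of_lt_inflection h0 hlt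

lemma entropyGap_eq_zero_iff {θ : ℝ} (hθ : θ ∈ Icc 0 1) :
    entropyGap θ = 0 ↔ θ = 0 ∨ θ = 1 / 2 ∨ θ = 1 := by
  constructor
  · intro hzero
    by_contra! hne
    exact (entropyGap_pos (hθ.1.lt_of_ne' hne.1) (hθ.2.lt_of_ne hne.2.2) hne.2.1).ne' hzero
  · rintro (rfl | rfl | rfl)
    exacts [entropyGap_zero, entropyGap_half, entropyGap_one]

lemma entropyGap_nonneg {θ : ℝ} (hθ : θ ∈ Icc 0 1) : 0 ≤ entropyGap θ := by
  by_cases hzero : θ = 0 ∨ θ = 1 / 2 ∨ θ = 1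
  · exact ((entropyGap_eq_zero_iff hθ).2 hzero).ge
  push Not at hzero
  exact (entropyGap_pos (hθ.1.lt_of_ne' hzero.1) (hθ.2.lt_of_ne hzero.2.2) hzero.2.1).le

noncomputable def threePointPrior : Measure ℝ :=
  ENNReal.ofReal (3 / 10) • Measure.dirac 0 + ENNReal.ofReal (2 / 5) • Measure.dirac (1 / 2)
    + ENNReal.ofReal (3 / 10) • Measure.dirac 1

lemma integral_threePointPrior (f : ℝ → ℝ) :
    ∫ θ, f θ ∂threePointPrior = 3 / 10 * f 0 + 2 / 5 * f (1 / 2) + 3 / 10 * f 1 := by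
  have hint (c a : ℝ) : Integrable f (ENNReal.ofReal c • Measure.dirac a) :=
    (integrable_dirac enorm_lt_top).smul_measure ENNReal.ofReal_ne_top
  rw [threePointPrior, integral_add_measure ((hint _ _).add_measure (hint _ _)) (hint _ _),
    integral_add_measure (hint _ _) (hint _ _)]
  simp only [integral_smul_measure, integral_dirac, smul_eq_mul]
  norm_num

instance : IsProbabilityMeasure threePointPrior := by
  constructor
  simp only [threePointPrior, Measure.coe_add, Measure.coe_smul, Pi.add_apply, Pi.smul_apply,
    measure_univ, smul_eq_mul, mul_one]
  rw [← ENNReal.ofReal_add (by norm_num) (by norm_num),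
    ← ENNReal.ofReal_add (by norm_num) (by norm_num)]
  norm_num

lemma threePointPrior_compl_Icc : threePointPrior (Icc 0 1)ᶜ = 0 := by
  norm_num [threePointPrior]

lemma Continuous.integrable_of_measure_compl_eq_zero {X E : Type*} [TopologicalSpace X]
    [T2Space X] [MeasurableSpace X] [OpensMeasurableSpace X] [NormedAddCommGroup E]
    {μ : Measure X} [IsFiniteMeasureOnCompacts μ] {f : X → E} (hf : Continuous f) {K : Set X}
    (hK : IsCompact K) (hμK : μ Kᶜ = 0) : Integrable f μ := by
  rw [← Measure.restrict_eq_self_of_ae_mem (ae_iff.2 hμK)]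
  exact hf.continuousOn.integrableOn_compact hK

lemma integral_entropyGap {μ : Measure ℝ} [IsFiniteMeasure μ] (hμ : μ (Icc 0 1)ᶜ = 0) :
    ∫ θ, entropyGap θ ∂μ = ∫ θ, binEnt θ ∂μ - 4 * log 2 * (∫ θ, θ ∂μ - ∫ θ, θ ^ 2 ∂μ) := by
  have hint {f : ℝ → ℝ} (hf : Continuous f) : Integrable f μ :=
    hf.integrable_of_measure_compl_eq_zero isCompact_Icc hμ
  simp only [entropyGap, mul_one_sub, ← sq]
  rw [integral_sub (hint continuous_binEnt) ((hint (by fun_prop)).const_mul _),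
    integral_const_mul, integral_sub (hint (by fun_prop)) (hint (by fun_prop))]

end

/-- If a Borel probability measure `π` on `[0,1]` with `∫θdπ = 1/2` and `∫θ²dπ = 2/5`
minimizes `∫ S dπ` among all Borel probability measures on `[0,1]` satisfying these two
moment conditions, then `π` is a discrete measure supported on at most four points. -/
theorem latent_information_prior_finite_support (π : Measure ℝ) [IsProbabilityMeasure π]
    (hsupp : π (Set.Icc (0 : ℝ) 1)ᶜ = 0)
    (hm1 : (∫ θ, θ ∂π) = 1 / 2) (hm2 : (∫ θ, θ ^ 2 ∂π) = 2 / 5)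
    (hmin : ∀ π' : Measure ℝ, IsProbabilityMeasure π' →
      π' (Set.Icc (0 : ℝ) 1)ᶜ = 0 →
      (∫ θ, θ ∂π') = 1 / 2 → (∫ θ, θ ^ 2 ∂π') = 2 / 5 →
      (∫ θ, binEnt θ ∂π) ≤ ∫ θ, binEnt θ ∂π') :
    ∃ s : Finset ℝ, s.card ≤ 4 ∧ π (↑s : Set ℝ)ᶜ = 0 := by
  have hIcc : ∀ᵐ θ ∂π, θ ∈ Icc 0 1 := mem_ae_iff.2 hsupp
  have hent : ∫ θ, binEnt θ ∂π ≤ 2 / 5 * Real.log 2 := by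
    have := hmin threePointPrior inferInstance threePointPrior_compl_Icc
      (by norm_num [integral_threePointPrior]) (by norm_num [integral_threePointPrior])
    rwa [integral_threePointPrior, binEnt_zero, binEnt_half, binEnt_one, mul_zero, add_zero,
      zero_add] at this
  have hgap : ∫ θ, entropyGap θ ∂π = ∫ θ, binEnt θ ∂π - 2 / 5 * Real.log 2 := by
    rw [integral_entropyGap hsupp, hm1, hm2]
    ring
  have hnonneg : 0 ≤ᵐ[π] entropyGap := hIcc.mono fun θ hθ => entropyGap_nonneg hθ
  have hzero : entropyGap =ᵐ[π] 0 :=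
    (integral_eq_zero_iff_of_nonneg_ae hnonneg
      (continuous_entropyGap.integrable_of_measure_compl_eq_zero isCompact_Icc hsupp)).1
      (le_antisymm (by linarith) (integral_nonneg_of_ae hnonneg))
  refine ⟨{0, 1 / 2, 1}, Finset.card_le_three.trans (by norm_num), mem_ae_iff.1 ?_⟩
  filter_upwards [hIcc, hzero] with θ hθ hθ0
  simpa using (entropyGap_eq_zero_iff hθ).1 hθ0
end

section
/- The function g(θ) = S(θ) + 3θ² − 3θ − 1/25 has exactly four distinct zeros in the open interval (0,1), and these zeros are symmetric about θ = 1/2 (i.e. g(θ) = 0 implies g(1−θ) = 0). -/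
open Real Set

lemma binEnt_eq_binEntropy : binEnt = binEntropy := by
  funext θ
  simp only [binEnt, binEntropy, log_inv]
  ring

lemma StrictConcaveOn.eq_or_eq_of_apply_eq {s : Set ℝ} {f : ℝ → ℝ} (hf : StrictConcaveOn ℝ s f)
    {a b x : ℝ} (ha : a ∈ s) (hb : b ∈ s) (hx : x ∈ s) (hab : a < b)
    (hfa : f a = f x) (hfb : f b = f x) : x = a ∨ x = b := by
  have key : ∀ {u v w : ℝ}, u ∈ s → w ∈ s → u < v → v < w →
      f u = f x → f v = f x → f w = f x → False := fun hu hw huv hvw hfu hfv hfw => by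
    have := hf.lt_on_openSegment hu hw (huv.trans hvw).ne
      (by rw [openSegment_eq_Ioo (huv.trans hvw)]; exact ⟨huv, hvw⟩)
    simp [hfu, hfv, hfw] at this
  by_contra! hne
  rcases lt_trichotomy x a with hxa | rfl | hax
  · exact key hx hb hxa hab rfl hfa hfb
  · exact hne.1 rfl
  rcases lt_trichotomy x b with hxb | rfl | hbx
  · exact key ha hb hax hxb hfa rfl hfb
  · exact hne.2 rfl
  · exact key ha hx hab hbx hfa hfb rfl

namespace FourZeros

noncomputable def g (θ : ℝ) : ℝ := binEnt θ + 3 * θ ^ 2 - 3 * θ - 1 / 25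

noncomputable def g' (θ : ℝ) : ℝ := log (1 - θ) - log θ + 6 * θ - 3

lemma g_one_sub (θ : ℝ) : g (1 - θ) = g θ := by
  simp only [g, binEnt_eq_binEntropy, binEntropy_one_sub]
  ring

lemma continuous_g : Continuous g := by
  unfold g
  rw [binEnt_eq_binEntropy]
  fun_prop

variable {θ : ℝ}

lemma hasDerivAt_g (h₀ : θ ≠ 0) (h₁ : θ ≠ 1) : HasDerivAt g (g' θ) θ := by
  have := ((((hasDerivAt_binEntropy h₀ h₁).add ((hasDerivAt_pow 2 θ).const_mul 3)).sub
    ((hasDerivAt_id θ).const_mul 3)).sub_const (1 / 25))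
  rw [← binEnt_eq_binEntropy] at this
  exact this.congr_deriv (by simp only [g']; norm_num; ring)

lemma hasDerivAt_g' (h₀ : θ ≠ 0) (h₁ : θ ≠ 1) :
    HasDerivAt g' (6 - 1 / (θ * (1 - θ))) θ := by
  have h₁' : 1 - θ ≠ 0 := sub_ne_zero.2 h₁.symm
  have := ((((hasDerivAt_id θ).const_sub 1).log h₁').sub (hasDerivAt_log h₀)).add
    ((hasDerivAt_id θ).const_mul 6) |>.sub_const 3
  exact this.congr_deriv (by simp only [id]; field_simp; ring)

lemma strictConcaveOn_g : StrictConcaveOn ℝ (Icc 0 (1 / 5)) g := by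
  have hanti : StrictAntiOn g' (Ioo 0 (1 / 5)) := by
    refine strictAntiOn_of_hasDerivWithinAt_neg (convex_Ioo _ _)
      (f' := fun θ => 6 - 1 / (θ * (1 - θ)))
      (fun x hx => (hasDerivAt_g' hx.1.ne' (by linarith [hx.2])).continuousAt.continuousWithinAt)
      (fun x hx => ?_) (fun x hx => ?_) <;> rw [interior_Ioo] at hx
    · exact (hasDerivAt_g' hx.1.ne' (by linarith [hx.2])).hasDerivWithinAt
    · have : 6 < 1 / (x * (1 - x)) := by
        rw [lt_one_div (by norm_num) (by nlinarith [hx.1, hx.2])]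
        nlinarith [hx.1, hx.2]
      linarith
  refine StrictAntiOn.strictConcaveOn_of_deriv (convex_Icc _ _) continuous_g.continuousOn ?_
  rw [interior_Icc]
  exact hanti.congr fun x hx => (hasDerivAt_g hx.1.ne' (by linarith [hx.2])).deriv.symm

lemma monotoneOn_g' : MonotoneOn g' (Icc (1 / 4) (1 / 2)) := by
  refine monotoneOn_of_hasDerivWithinAt_nonneg (convex_Icc _ _)
    (f' := fun θ => 6 - 1 / (θ * (1 - θ))) (fun x hx =>
      (hasDerivAt_g' (by linarith [hx.1]) (by linarith [hx.2])).continuousAt.continuousWithinAt)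
    (fun x hx => ?_) (fun x hx => ?_) <;> rw [interior_Icc] at hx
  · exact (hasDerivAt_g' (by linarith [hx.1]) (by linarith [hx.2])).hasDerivWithinAt
  · have : 1 / (x * (1 - x)) ≤ 6 := by
      rw [div_le_iff₀ (by nlinarith [hx.1, hx.2])]
      nlinarith [hx.1, hx.2]
    linarith

lemma g'_nonpos (hθ : θ ∈ Icc (1 / 5) (1 / 2)) : g' θ ≤ 0 := by
  rcases le_total θ (1 / 4) with h | h
  · -- `(1 - θ) / θ ≤ 4` and `6 θ - 3 ≤ -3 / 2`
    have hlog : log (1 - θ) - log θ ≤ 2 * log 2 := by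
      rw [← log_div (by linarith [hθ.2]) (by linarith [hθ.1]), ← log_rpow two_pos]
      exact log_le_log (div_pos (by linarith [hθ.2]) (by linarith [hθ.1]))
        (by rw [div_le_iff₀ (by linarith [hθ.1])]; norm_num; linarith [hθ.1])
    have := log_two_lt_d9
    simp only [g']
    linarith
  · calc g' θ ≤ g' (1 / 2) := monotoneOn_g' ⟨h, hθ.2⟩ ⟨by norm_num, le_rfl⟩ hθ.2
      _ = 0 := by norm_num [g']

lemma antitoneOn_g : AntitoneOn g (Icc (1 / 5) (1 / 2)) := by
  refine antitoneOn_of_hasDerivWithinAt_nonpos (convex_Icc _ _) continuous_g.continuousOn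
    (f' := g')
    (fun x hx => ?_) (fun x hx => ?_) <;> rw [interior_Icc] at hx
  · exact (hasDerivAt_g (by linarith [hx.1]) (by linarith [hx.2])).hasDerivWithinAt
  · exact g'_nonpos ⟨hx.1.le, hx.2.le⟩

lemma g_one_hundredth_neg : g (1 / 100) < 0 := by
  have h100 : log 100 ≤ 7 * log 2 := by
    have := log_le_log (by norm_num) (show (100 : ℝ) ≤ 2 ^ 7 by norm_num)
    rwa [log_pow, Nat.cast_ofNat] at this
  have h99 := log_le_sub_one_of_pos (show (0 : ℝ) < 100 / 99 by norm_num)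
  have := log_two_lt_d9
  norm_num [g, binEnt_eq_binEntropy, binEntropy]
  linarith

lemma g_one_twentieth_pos : 0 < g (1 / 20) := by
  have h20 : 4 * log 2 ≤ log 20 := by
    have := log_le_log (by norm_num) (show (2 : ℝ) ^ 4 ≤ 20 by norm_num)
    rwa [log_pow, Nat.cast_ofNat] at this
  have h19 := one_sub_inv_le_log_of_pos (show (0 : ℝ) < 20 / 19 by norm_num)
  have := log_two_gt_d9
  norm_num [g, binEnt_eq_binEntropy, binEntropy] at h19 ⊢
  linarith

lemma g_one_fifth_neg : g (1 / 5) < 0 := by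
  have h5 : log 5 = 2 * log 2 + log (5 / 4) := by
    have := log_mul (show (2 : ℝ) ^ 2 ≠ 0 by norm_num) (show (5 / 4 : ℝ) ≠ 0 by norm_num)
    rw [log_pow] at this
    norm_num at this
    exact this
  have h54 : log (5 / 4) ≤ 1 / 9 + 1 / 8 := by
    rw [show (5 / 4 : ℝ) = 10 / 9 * (9 / 8) by norm_num, log_mul (by norm_num) (by norm_num)]
    linarith [log_le_sub_one_of_pos (show (0 : ℝ) < 10 / 9 by norm_num),
      log_le_sub_one_of_pos (show (0 : ℝ) < 9 / 8 by norm_num)]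
  have := log_two_lt_d9
  norm_num [g, binEnt_eq_binEntropy, binEntropy]
  linarith

lemma g_neg (hθ : θ ∈ Icc (1 / 5) (4 / 5)) : g θ < 0 := by
  wlog h : θ ≤ 1 / 2 generalizing θ
  · rw [← g_one_sub]
    exact this ⟨by linarith [hθ.2], by linarith [hθ.1]⟩ (by linarith)
  exact (antitoneOn_g ⟨le_rfl, by norm_num⟩ ⟨hθ.1, h⟩ hθ.1).trans_lt g_one_fifth_neg

def zeros : Set ℝ := {θ ∈ Ioo 0 1 | g θ = 0}

lemma one_sub_mem_zeros (h : θ ∈ zeros) : 1 - θ ∈ zeros :=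
  ⟨⟨by linarith [h.1.2], by linarith [h.1.1]⟩, (g_one_sub θ).trans h.2⟩

lemma mem_zeros_iff {a b : ℝ} (ha : a ∈ Ioo 0 (1 / 5)) (hb : b ∈ Ioo 0 (1 / 5)) (hab : a < b)
    (hga : g a = 0) (hgb : g b = 0) : θ ∈ zeros ↔ θ = a ∨ θ = b ∨ θ = 1 - b ∨ θ = 1 - a := by
  have ha' : a ∈ zeros := ⟨⟨ha.1, by linarith [ha.2]⟩, hga⟩
  have hb' : b ∈ zeros := ⟨⟨hb.1, by linarith [hb.2]⟩, hgb⟩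
  have hzero {x : ℝ} (hx : x ∈ Ioo 0 (1 / 5)) (hgx : g x = 0) : x = a ∨ x = b :=
    strictConcaveOn_g.eq_or_eq_of_apply_eq (Ioo_subset_Icc_self ha) (Ioo_subset_Icc_self hb)
      (Ioo_subset_Icc_self hx) hab (hga.trans hgx.symm) (hgb.trans hgx.symm)
  refine ⟨fun hθ => ?_, ?_⟩
  · rcases lt_or_ge θ (1 / 5) with h | h
    · rcases hzero ⟨hθ.1.1, h⟩ hθ.2 with rfl | rfl <;> simp
    rcases le_or_gt θ (4 / 5) with h' | h'
    · exact absurd hθ.2 (g_neg ⟨h, h'⟩).ne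
    rcases hzero ⟨by linarith [hθ.1.2], by linarith⟩ (one_sub_mem_zeros hθ).2 with h | h
    · exact Or.inr (Or.inr (Or.inr (by linarith)))
    · exact Or.inr (Or.inr (Or.inl (by linarith)))
  · rintro (rfl | rfl | rfl | rfl)
    exacts [ha', hb', one_sub_mem_zeros hb', one_sub_mem_zeros ha']

end FourZeros

open FourZeros

/-- The function `g(θ) = S(θ) + 3θ² − 3θ − 1/25` has exactly four distinct zeros in `(0,1)`,
and the zero set is symmetric about `θ = 1/2`. -/
theorem four_zeros :
    (∃ s : Finset ℝ,
      s.card = 4 ∧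
      ∀ θ : ℝ, θ ∈ s ↔ (θ ∈ Set.Ioo (0 : ℝ) 1 ∧
        binEnt θ + 3 * θ ^ 2 - 3 * θ - 1 / 25 = 0)) ∧
    ∀ θ ∈ Set.Ioo (0 : ℝ) 1,
      binEnt θ + 3 * θ ^ 2 - 3 * θ - 1 / 25 = 0 →
      binEnt (1 - θ) + 3 * (1 - θ) ^ 2 - 3 * (1 - θ) - 1 / 25 = 0 := by
  obtain ⟨z₁, hz₁, hgz₁⟩ := intermediate_value_Ioo (by norm_num : (1 / 100 : ℝ) ≤ 1 / 20)
    continuous_g.continuousOn ⟨g_one_hundredth_neg, g_one_twentieth_pos⟩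
  obtain ⟨z₂, hz₂, hgz₂⟩ := intermediate_value_Ioo' (by norm_num : (1 / 20 : ℝ) ≤ 1 / 5)
    continuous_g.continuousOn ⟨g_one_fifth_neg, g_one_twentieth_pos⟩
  have hzeros (θ : ℝ) : θ ∈ zeros ↔ θ = z₁ ∨ θ = z₂ ∨ θ = 1 - z₂ ∨ θ = 1 - z₁ :=
    mem_zeros_iff ⟨by linarith [hz₁.1], by linarith [hz₁.2]⟩ ⟨by linarith [hz₂.1], hz₂.2⟩
      (by linarith [hz₁.2, hz₂.1]) hgz₁ hgz₂
  refine ⟨⟨{z₁, z₂, 1 - z₂, 1 - z₁}, ?_, fun θ => ?_⟩, fun θ hθ h => (one_sub_mem_zeros ⟨hθ, h⟩).2⟩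
  · refine Finset.card_eq_four.2 ⟨_, _, _, _, ?_, ?_, ?_, ?_, ?_, ?_, rfl⟩ <;>
      exact ne_of_lt (by linarith [hz₁.1, hz₁.2, hz₂.1, hz₂.2])
  · rw [Finset.mem_insert, Finset.mem_insert, Finset.mem_insert, Finset.mem_singleton]
    exact (hzeros θ).symm
end
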